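/- arXiv:2102.08676 — 6 statements merged into one kernel-verified Lean document; each statement's English description precedes it below -/
import Mathlib

section
/- For any complex number z and integers α, β ≥ 0, the following polynomial identity holds: Γ(z+α)/Γ(z-β) = Σ_{i=0}^{α+β} ((α+β)!/i!) · (B^{(1+α+β)}_{α+β-i}(α)/(α+β-i)!) · z^i, where the left-hand side is interpreted as the product (z-β)(z-β+1)···(z+α-1) of α+β consecutive factors. -/
/-- Generalized Bernoulli polynomial `B_n^{(m)}(t)`, defined by the exponential
generating function `x^m e^{tx}/(e^x-1)^m = Σ_{n≥0} B_n^{(m)}(t) x^n/n!`. -/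
noncomputable def genBernoulli (m : ℕ) (t : ℚ) (n : ℕ) : ℚ :=
  (n.factorial : ℚ) * PowerSeries.coeff (R := ℚ) n
    (((PowerSeries.mk fun k => bernoulli k / (k.factorial : ℚ)) ^ m) *
      PowerSeries.mk fun k => t ^ k / (k.factorial : ℚ))

open PowerSeries Finset

private lemma mkBern : (PowerSeries.mk fun k => (bernoulli k : ℚ) / (k.factorial : ℚ))
    = bernoulliPowerSeries ℚ := by
  ext n
  simp [bernoulliPowerSeries]

private lemma mkExp (t : ℚ) : (PowerSeries.mk fun k => t ^ k / (k.factorial : ℚ))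
    = rescale t (PowerSeries.exp ℚ) := by
  ext n
  simp [coeff_rescale, coeff_exp, div_eq_mul_inv]

private lemma genBernoulli_eq (m : ℕ) (t : ℚ) (n : ℕ) :
    genBernoulli m t n = (n.factorial : ℚ) * PowerSeries.coeff n
      (bernoulliPowerSeries ℚ ^ m * rescale t (PowerSeries.exp ℚ)) := by
  rw [genBernoulli, mkBern, mkExp]

private lemma expDeriv : d⁄dX ℚ (PowerSeries.exp ℚ) = PowerSeries.exp ℚ := by
  ext n
  rw [coeff_derivative, coeff_exp, coeff_exp]
  simp only [map_div₀, map_one, map_natCast, eq_ratCast, Rat.cast_natCast]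
  have h : ((n+1).factorial : ℚ) ≠ 0 := Nat.cast_ne_zero.mpr (Nat.factorial_ne_zero _)
  have h2 : (n.factorial : ℚ) ≠ 0 := Nat.cast_ne_zero.mpr (Nat.factorial_ne_zero _)
  rw [Nat.factorial_succ]
  push_cast
  field_simp

private lemma ode : (X : ℚ⟦X⟧) * (d⁄dX ℚ (bernoulliPowerSeries ℚ))
    = bernoulliPowerSeries ℚ - bernoulliPowerSeries ℚ ^ 2 - X * bernoulliPowerSeries ℚ := by
  set B := bernoulliPowerSeries ℚ with hB
  have key : B * (PowerSeries.exp ℚ - 1) = X := bernoulliPowerSeries_mul_exp_sub_one ℚ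
  have hde : d⁄dX ℚ (PowerSeries.exp ℚ - 1) = PowerSeries.exp ℚ := by
    rw [map_sub, expDeriv, Derivation.map_one_eq_zero, sub_zero]
  have hd : d⁄dX ℚ (B * (PowerSeries.exp ℚ - 1)) = 1 := by rw [key, derivative_X]
  rw [Derivation.leibniz, hde, smul_eq_mul, smul_eq_mul] at hd
  have hBexp : B * PowerSeries.exp ℚ = X + B := by
    calc B * PowerSeries.exp ℚ = B * (PowerSeries.exp ℚ - 1) + B := by ring
      _ = X + B := by rw [key]
  have hmul := congrArg (fun f => B * f) hd
  simp only [mul_add, mul_one] at hmul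
  have h2 : B * (B * PowerSeries.exp ℚ) + X * d⁄dX ℚ B = B := by
    calc B * (B * PowerSeries.exp ℚ) + X * d⁄dX ℚ B
        = B * (B * PowerSeries.exp ℚ) + B * ((PowerSeries.exp ℚ - 1) * d⁄dX ℚ B) := by
          rw [show B * ((PowerSeries.exp ℚ - 1) * d⁄dX ℚ B)
              = (B * (PowerSeries.exp ℚ - 1)) * d⁄dX ℚ B by ring, key]
      _ = B := hmul
  rw [hBexp] at h2
  linear_combination h2

private lemma coeff_diag : ∀ m : ℕ, PowerSeries.coeff m (bernoulliPowerSeries ℚ ^ (m+1)) = (-1)^m := by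
  intro m
  induction m with
  | zero => simp [bernoulliPowerSeries]
  | succ m ih =>
    set B := bernoulliPowerSeries ℚ with hB
    have hpow : d⁄dX ℚ (B ^ (m+1)) = C ((m:ℚ)+1) * (B ^ m * d⁄dX ℚ B) := by
      rw [Derivation.leibniz_pow]
      rw [smul_eq_mul, nsmul_eq_mul]
      rw [show (((m+1:ℕ)):ℚ⟦X⟧) = C ((m:ℚ)+1) by simp]
      rw [Nat.add_sub_cancel]
    have key : (X : ℚ⟦X⟧) * d⁄dX ℚ (B ^ (m+1))
        = C ((m:ℚ)+1) * (B ^ (m+1) - B ^ (m+2) - X * B ^ (m+1)) := by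
      rw [hpow]
      linear_combination (C ((m:ℚ)+1) * B ^ m) * ode
    have hc := congrArg (PowerSeries.coeff (m+1)) key
    rw [coeff_succ_X_mul, coeff_derivative, coeff_C_mul, map_sub, map_sub,
      coeff_succ_X_mul, ih] at hc
    have hne : ((m:ℚ)+1) ≠ 0 := by positivity
    have h4 : ((m:ℚ)+1) * PowerSeries.coeff (m+1) (B ^ (m+2))
        = ((m:ℚ)+1) * (-(-1)^m) := by linear_combination hc
    have h5 := mul_left_cancel₀ hne h4
    rw [h5]
    ring

private lemma genB_add (m n : ℕ) (s t : ℚ) :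
    genBernoulli m (s + t) n = ∑ k ∈ Finset.range (n+1),
      (n.choose k : ℚ) * genBernoulli m s k * t ^ (n - k) := by
  have hE : rescale (s + t) (PowerSeries.exp ℚ)
      = rescale s (PowerSeries.exp ℚ) * rescale t (PowerSeries.exp ℚ) :=
    (PowerSeries.exp_mul_exp_eq_exp_add s t).symm
  rw [genBernoulli_eq, hE, ← mul_assoc, PowerSeries.coeff_mul,
    Finset.Nat.sum_antidiagonal_eq_sum_range_succ_mk, Finset.mul_sum]
  refine Finset.sum_congr rfl fun k hk => ?_
  have hkn : k ≤ n := Nat.lt_succ_iff.mp (Finset.mem_range.mp hk)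
  rw [genBernoulli_eq, coeff_rescale, coeff_exp]
  have h1 : (k.factorial : ℚ) ≠ 0 := Nat.cast_ne_zero.mpr (Nat.factorial_ne_zero _)
  have h2 : (((n-k).factorial : ℕ) : ℚ) ≠ 0 := Nat.cast_ne_zero.mpr (Nat.factorial_ne_zero _)
  rw [Nat.cast_choose ℚ hkn]
  simp only [map_div₀, map_one, map_natCast, eq_ratCast, Rat.cast_natCast]
  field_simp

private lemma genB_zero (m : ℕ) (t : ℚ) : genBernoulli m t 0 = 1 := by
  rw [genBernoulli_eq, coeff_zero_eq_constantCoeff, map_mul, map_pow]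
  have h1 : constantCoeff (bernoulliPowerSeries ℚ) = 1 := by
    rw [← coeff_zero_eq_constantCoeff]
    simp [bernoulliPowerSeries]
  have h2 : constantCoeff (rescale t (PowerSeries.exp ℚ)) = 1 := by
    rw [← coeff_zero_eq_constantCoeff, coeff_rescale]
    simp [PowerSeries.coeff_exp]
  rw [h1, h2]
  simp

private lemma genB_diag_zero (m : ℕ) : genBernoulli (m+1) 0 m = (m.factorial : ℚ) * (-1)^m := by
  rw [genBernoulli_eq]
  have h : rescale (0:ℚ) (PowerSeries.exp ℚ) = 1 := by
    rw [rescale_zero]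
    simp
  rw [h, mul_one, coeff_diag]

private lemma genB_diff (m : ℕ) (t : ℚ) :
    genBernoulli (m+2) (t+1) (m+1)
      = genBernoulli (m+2) t (m+1) + ((m:ℚ)+1) * genBernoulli (m+1) t m := by
  set B := bernoulliPowerSeries ℚ with hB
  set Et := rescale t (PowerSeries.exp ℚ) with hEt
  have key : B * (PowerSeries.exp ℚ - 1) = X := bernoulliPowerSeries_mul_exp_sub_one ℚ
  have hE : rescale (t+1) (PowerSeries.exp ℚ) = Et * PowerSeries.exp ℚ := by
    rw [← PowerSeries.exp_mul_exp_eq_exp_add t 1, rescale_one]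
    rfl
  have hser : B^(m+2) * (Et * PowerSeries.exp ℚ)
      = B^(m+2) * Et + X * (B^(m+1) * Et) := by
    linear_combination (B^(m+1) * Et) * key
  rw [genBernoulli_eq, genBernoulli_eq, genBernoulli_eq, hE, hser, map_add,
    coeff_succ_X_mul, Nat.factorial_succ]
  push_cast
  ring

private lemma prod_at_zero (m : ℕ) :
    ∏ j ∈ Finset.range m, ((0:ℚ) - ((j:ℚ)+1)) = (-1)^m * (m.factorial : ℚ) := by
  induction m with
  | zero => simp
  | succ m ih =>
    rw [Finset.prod_range_succ, ih, Nat.factorial_succ]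
    push_cast
    ring

private lemma prod_step (m : ℕ) (t : ℚ) :
    ∏ j ∈ Finset.range (m+1), ((t+1) - ((j:ℚ)+1))
      = ∏ j ∈ Finset.range (m+1), (t - ((j:ℚ)+1))
        + ((m:ℚ)+1) * ∏ j ∈ Finset.range m, (t - ((j:ℚ)+1)) := by
  have h1 : ∏ j ∈ Finset.range (m+1), ((t+1) - ((j:ℚ)+1))
      = (∏ j ∈ Finset.range m, (t - ((j:ℚ)+1))) * t := by
    rw [show (fun j : ℕ => (t+1) - ((j:ℚ)+1)) = fun j : ℕ => t - (j:ℚ) by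
      funext j; ring]
    rw [Finset.prod_range_succ']
    push_cast
    simp
  rw [h1, Finset.prod_range_succ]
  ring

private lemma genB_diag_nat (m : ℕ) : ∀ n : ℕ,
    genBernoulli (m+1) (n:ℚ) m = ∏ j ∈ Finset.range m, ((n:ℚ) - ((j:ℚ)+1)) := by
  induction m with
  | zero => intro n; simpa using genB_zero 1 (n:ℚ)
  | succ m ih =>
    intro n
    induction n with
    | zero =>
      rw [Nat.cast_zero, genB_diag_zero, prod_at_zero]
      ring
    | succ n ihn =>
      have hd := genB_diff m (n:ℚ)
      rw [Nat.cast_succ, hd, ihn, ih n, prod_step]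

private lemma genB_diag (m : ℕ) (t : ℚ) :
    genBernoulli (m+1) t m = ∏ j ∈ Finset.range m, (t - ((j:ℚ)+1)) := by
  classical
  set Q : Polynomial ℚ := ∑ k ∈ Finset.range (m+1),
    Polynomial.C ((m.choose k : ℚ) * genBernoulli (m+1) 0 k) * Polynomial.X ^ (m-k) with hQ
  set P : Polynomial ℚ := ∏ j ∈ Finset.range m,
    (Polynomial.X - Polynomial.C ((j:ℚ)+1)) with hP
  have evalQ : ∀ s : ℚ, Q.eval s = genBernoulli (m+1) s m := by
    intro s
    have := genB_add (m+1) m 0 s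
    rw [zero_add] at this
    rw [this, hQ, Polynomial.eval_finset_sum]
    refine Finset.sum_congr rfl fun k hk => ?_
    simp [mul_comm]
  have evalP : ∀ s : ℚ, P.eval s = ∏ j ∈ Finset.range m, (s - ((j:ℚ)+1)) := by
    intro s
    rw [hP, Polynomial.eval_prod]
    refine Finset.prod_congr rfl fun j hj => ?_
    simp
  have hQP : Q = P := by
    apply Polynomial.eq_of_infinite_eval_eq
    apply Set.Infinite.mono (s := Set.range (Nat.cast : ℕ → ℚ))
    · rintro x ⟨n, rfl⟩
      simp only [Set.mem_setOf_eq]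
      rw [evalQ, evalP, genB_diag_nat]
    · exact Set.infinite_range_of_injective Nat.cast_injective
  rw [← evalQ, hQP, evalP]

private lemma ratVersion (α β : ℕ) (t : ℚ) :
    ∑ i ∈ Finset.range (α+β+1),
        ((α+β).choose i : ℚ) * genBernoulli (α+β+1) (α:ℚ) (α+β-i) * t^i
      = ∏ j ∈ Finset.range (α+β), (t - (β:ℚ) + (j:ℚ)) := by
  set m := α + β with hm
  have hsum : (∑ i ∈ Finset.range (m+1),
        (m.choose i : ℚ) * genBernoulli (m+1) (α:ℚ) (m-i) * t^i)
      = ∑ i ∈ Finset.range (m+1),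
        (m.choose i : ℚ) * genBernoulli (m+1) (α:ℚ) i * t^(m-i) := by
    rw [← Finset.sum_range_reflect
      (fun i => (m.choose i : ℚ) * genBernoulli (m+1) (α:ℚ) i * t^(m-i)) (m+1)]
    refine Finset.sum_congr rfl fun j hj => ?_
    have hj' : j ≤ m := Nat.lt_succ_iff.mp (Finset.mem_range.mp hj)
    rw [show m + 1 - 1 - j = m - j from by omega, Nat.choose_symm hj',
      Nat.sub_sub_self hj']
  rw [hsum, ← genB_add (m+1) m (α:ℚ) t, genB_diag]
  rw [← Finset.prod_range_reflect (fun j => t - (β:ℚ) + (j:ℚ)) m]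
  refine Finset.prod_congr rfl fun j hj => ?_
  have hj' : j < m := Finset.mem_range.mp hj
  have hc : ((m - 1 - j : ℕ) : ℚ) = (m:ℚ) - 1 - (j:ℚ) := by
    have : ((m - 1 - j : ℕ)) = m - (1 + j) := by omega
    rw [this, Nat.cast_sub (by omega)]
    push_cast
    ring
  rw [hc]
  have hmq : (m:ℚ) = (α:ℚ) + (β:ℚ) := by rw [hm]; push_cast; ring
  rw [hmq]
  ring


/-- For any complex `z` and integers `α, β ≥ 0`,
`Γ(z+α)/Γ(z-β) = Σ_{i=0}^{α+β} ((α+β)!/i!) · (B^{(1+α+β)}_{α+β-i}(α)/(α+β-i)!) · z^i`,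
where the left-hand side is the product `(z-β)(z-β+1)···(z+α-1)` of `α+β` factors. -/
theorem gammaRatio_eq_genBernoulli_sum (z : ℂ) (α β : ℕ) :
    ∏ j ∈ Finset.range (α + β), (z - (β : ℂ) + (j : ℂ)) =
      ∑ i ∈ Finset.range (α + β + 1),
        (((α + β).factorial : ℂ) / (i.factorial : ℂ)) *
          ((genBernoulli (1 + α + β) (α : ℚ) (α + β - i) : ℚ) : ℂ) /
            ((α + β - i).factorial : ℂ) * z ^ i := by
  classical
  have horder : 1 + α + β = α + β + 1 := by omega
  rw [horder]
  set m := α + β with hm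
  set Q : Polynomial ℚ := ∑ i ∈ Finset.range (m+1),
    Polynomial.C ((m.choose i : ℚ) * genBernoulli (m+1) (α:ℚ) (m-i)) * Polynomial.X ^ i
    with hQdef
  set P : Polynomial ℚ := ∏ j ∈ Finset.range m,
    (Polynomial.X - Polynomial.C ((β:ℚ)) + Polynomial.C ((j:ℚ))) with hPdef
  have hQP : Q = P := by
    apply Polynomial.funext
    intro r
    rw [hQdef, hPdef, Polynomial.eval_finset_sum, Polynomial.eval_prod]
    have hrv := ratVersion α β r
    simp only [Polynomial.eval_mul, Polynomial.eval_pow, Polynomial.eval_C,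
      Polynomial.eval_X, Polynomial.eval_add, Polynomial.eval_sub]
    exact hrv
  have key := congrArg (fun p : Polynomial ℚ => Polynomial.aeval z p) hQP
  simp only [hQdef, hPdef, map_sum, map_prod, map_mul, map_pow, map_sub, map_add,
    Polynomial.aeval_X, Polynomial.aeval_C, eq_ratCast, Rat.cast_mul,
    Rat.cast_natCast] at key
  rw [← key]
  refine Finset.sum_congr rfl fun i hi => ?_
  have hi' : i ≤ m := Nat.lt_succ_iff.mp (Finset.mem_range.mp hi)
  have hch : ((m.choose i : ℕ) : ℂ)
      = (m.factorial : ℂ) / ((i.factorial : ℂ) * ((m-i).factorial : ℂ)) := by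
    rw [Nat.cast_choose ℂ hi']
  have h1 : (i.factorial : ℂ) ≠ 0 := Nat.cast_ne_zero.mpr (Nat.factorial_ne_zero _)
  have h2 : (((m-i).factorial : ℕ) : ℂ) ≠ 0 := Nat.cast_ne_zero.mpr (Nat.factorial_ne_zero _)
  rw [hch]
  field_simp
end

section
/- For every integer m ≥ 1, the generalized Bernoulli polynomial satisfies B^{(2m+1)}_{2m}(m) = 0. -/
open PowerSeries

/-- Abbreviation for the Bernoulli power series over `ℚ`. -/
noncomputable abbrev Bps : ℚ⟦X⟧ := bernoulliPowerSeries ℚ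

lemma derivative_exp_q : d⁄dX ℚ (exp ℚ) = exp ℚ := by
  ext n
  rw [PowerSeries.coeff_derivative, coeff_exp, coeff_exp]
  have h1 : ((n+1).factorial : ℚ) = (n+1) * n.factorial := by
    push_cast [Nat.factorial_succ]; ring
  have h2 : (n.factorial : ℚ) ≠ 0 := by positivity
  simp only [eq_ratCast, Rat.cast_div, Rat.cast_one, Rat.cast_natCast, h1]
  field_simp
  simp

lemma X_mul_dB : X * (d⁄dX ℚ Bps) = Bps - X * Bps - Bps ^ 2 := by
  have h := bernoulliPowerSeries_mul_exp_sub_one ℚ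
  have h1 : d⁄dX ℚ (Bps * (exp ℚ - 1)) = 1 := by
    rw [h]; simp
  rw [Derivation.leibniz] at h1
  simp only [smul_eq_mul, map_sub, derivative_exp_q, Derivation.map_one_eq_zero,
    sub_zero] at h1
  linear_combination Bps * h1 - (d⁄dX ℚ Bps + Bps) * h

lemma coeff_B_pow_succ (k : ℕ) : coeff (R := ℚ) k (Bps ^ (k+1)) = (-1 : ℚ)^k := by
  induction k with
  | zero =>
    simp [bernoulliPowerSeries, coeff_mk]
  | succ k ih =>
    have hd : d⁄dX ℚ (Bps ^ (k+1)) = (k+1) • (Bps ^ k * d⁄dX ℚ Bps) := by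
      rw [Derivation.leibniz_pow]
      simp [smul_eq_mul]
    have hmid : X * (Bps ^ k * d⁄dX ℚ Bps)
        = Bps ^ (k+1) - X * Bps ^ (k+1) - Bps ^ (k+2) := by
      calc X * (Bps ^ k * d⁄dX ℚ Bps) = Bps ^ k * (X * d⁄dX ℚ Bps) := by ring
        _ = Bps ^ k * (Bps - X * Bps - Bps ^ 2) := by rw [X_mul_dB]
        _ = Bps ^ (k+1) - X * Bps ^ (k+1) - Bps ^ (k+2) := by ring
    have hkey : X * d⁄dX ℚ (Bps ^ (k+1)) =
        (k+1) • (Bps ^ (k+1) - X * Bps ^ (k+1) - Bps ^ (k+2)) := by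
      rw [hd, mul_smul_comm, hmid]
    have hco := congrArg (coeff (R := ℚ) (k+1)) hkey
    rw [coeff_succ_X_mul, PowerSeries.coeff_derivative, map_nsmul, map_sub, map_sub,
      coeff_succ_X_mul, ih, nsmul_eq_mul] at hco
    push_cast at hco
    have hne : ((k:ℚ) + 1) ≠ 0 := by positivity
    have h6 : coeff (R := ℚ) (k+1) (Bps ^ (k+1)) =
        coeff (R := ℚ) (k+1) (Bps ^ (k+1)) - (-1:ℚ)^k - coeff (R := ℚ) (k+1) (Bps ^ (k+2)) :=
      mul_left_cancel₀ hne (by linarith [hco])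
    have : coeff (R := ℚ) (k+1) (Bps ^ (k+2)) = -(-1:ℚ)^k := by linarith [h6]
    rw [show k+1+1 = k+2 from rfl, this, pow_succ]
    ring

lemma mk_bernoulli_eq : (PowerSeries.mk fun k => bernoulli k / (k.factorial : ℚ)) = Bps := by
  ext n
  simp [bernoulliPowerSeries, coeff_mk]

lemma mk_exp_eq (m : ℕ) :
    (PowerSeries.mk fun k => (m:ℚ) ^ k / (k.factorial : ℚ)) = exp ℚ ^ m := by
  rw [exp_pow_eq_rescale_exp]
  ext n
  simp [coeff_rescale, coeff_exp, div_eq_mul_inv]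

theorem genBernoulli_two_mul_eq_zero' (m : ℕ) (hm : 1 ≤ m) :
    (2*m).factorial * coeff (R := ℚ) (2*m) (Bps ^ (2*m+1) * exp ℚ ^ m) = 0 := by
  have hexpand : exp ℚ ^ m =
      ∑ i ∈ Finset.range (m+1), (m.choose i) • (exp ℚ - 1) ^ i := by
    have := add_pow (exp ℚ - 1) 1 m
    simp only [one_pow, mul_one, sub_add_cancel] at this
    rw [this]
    refine Finset.sum_congr rfl fun i _ => ?_
    rw [nsmul_eq_mul, mul_comm]
  have hterm : ∀ i ∈ Finset.range (m+1),
      coeff (R := ℚ) (2*m) (Bps ^ (2*m+1) * (exp ℚ - 1) ^ i) = (-1:ℚ) ^ (2*m-i) := by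
    intro i hi
    have him : i ≤ m := Nat.lt_succ_iff.mp (Finset.mem_range.mp hi)
    have hi2m : i ≤ 2*m := le_trans him (by omega)
    have hsplit : Bps ^ (2*m+1) * (exp ℚ - 1) ^ i
        = X ^ i * Bps ^ (2*m-i+1) := by
      have hpow : (2:ℕ)*m+1 = (2*m-i+1) + i := by omega
      rw [hpow, pow_add, mul_assoc, ← mul_pow, bernoulliPowerSeries_mul_exp_sub_one]
      ring
    rw [hsplit, coeff_X_pow_mul', if_pos hi2m, coeff_B_pow_succ]
  have hsum : coeff (R := ℚ) (2*m) (Bps ^ (2*m+1) * exp ℚ ^ m)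
      = ∑ i ∈ Finset.range (m+1), (m.choose i : ℚ) * (-1:ℚ) ^ (2*m-i) := by
    rw [hexpand, Finset.mul_sum, map_sum]
    refine Finset.sum_congr rfl fun i hi => ?_
    rw [mul_smul_comm, map_nsmul, hterm i hi, nsmul_eq_mul]
  have hzero : ∑ i ∈ Finset.range (m+1), (m.choose i : ℚ) * (-1:ℚ) ^ (2*m-i) = 0 := by
    have hrw : ∀ i ∈ Finset.range (m+1),
        (m.choose i : ℚ) * (-1:ℚ) ^ (2*m-i)
          = (-1:ℚ)^m * ((1:ℚ)^i * (-1:ℚ)^(m-i) * (m.choose i : ℚ)) := by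
      intro i hi
      have him : i ≤ m := Nat.lt_succ_iff.mp (Finset.mem_range.mp hi)
      rw [show 2*m-i = m + (m-i) by omega, pow_add, one_pow]
      ring
    rw [Finset.sum_congr rfl hrw, ← Finset.mul_sum, ← add_pow (1:ℚ) (-1) m]
    rw [show (1:ℚ) + (-1) = 0 by norm_num, zero_pow (by omega : m ≠ 0), mul_zero]
  rw [hsum, hzero, mul_zero]

/-- For every integer `m ≥ 1`, `B^{(2m+1)}_{2m}(m) = 0`. -/
theorem genBernoulli_two_mul_eq_zero (m : ℕ) (hm : 1 ≤ m) :
    genBernoulli (2 * m + 1) (m : ℚ) (2 * m) = 0 := by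
  rw [genBernoulli, mk_bernoulli_eq, mk_exp_eq]
  exact genBernoulli_two_mul_eq_zero' m hm
end

section
/- For every integer m ≥ 1, B^{(2m+1)}_{2m-2}(m) = (-1)^{m+1} · 2 · (2m-2)!/(2m)! · ((m-1)!)². -/
section Interp

open Polynomial Finset

noncomputable def aQ (m j : ℕ) : ℚ :=
  Polynomial.eval ((m:ℚ)-1) (Polynomial.derivative (Polynomial.derivative
    (Lagrange.basis (Finset.range (2*m+1)) (Nat.cast : ℕ → ℚ) j)))

lemma interp_sum (m n : ℕ) (hn : n ≤ 2*m) :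
    ∑ j ∈ Finset.range (2*m+1), aQ m j * (j:ℚ)^n
      = Polynomial.eval ((m:ℚ)-1) (Polynomial.derivative (Polynomial.derivative
          ((Polynomial.X : ℚ[X])^n))) := by
  have hinj : Set.InjOn (Nat.cast : ℕ → ℚ) ↑(Finset.range (2*m+1)) :=
    fun a _ b _ h => Nat.cast_injective h
  have hdeg : (Polynomial.X ^ n : ℚ[X]).degree < ((Finset.range (2*m+1)).card : ℕ) := by
    rw [Polynomial.degree_X_pow, Finset.card_range]
    exact_mod_cast Nat.lt_succ_of_le hn
  have hX := Lagrange.eq_interpolate hinj hdeg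
  rw [Lagrange.interpolate_apply] at hX
  conv_rhs => rw [hX]
  rw [Polynomial.derivative_sum]
  simp only [Polynomial.derivative_C_mul, Polynomial.derivative_sum, Polynomial.eval_finset_sum,
    Polynomial.eval_mul, Polynomial.eval_C, Polynomial.eval_pow, Polynomial.eval_X, aQ]
  exact Finset.sum_congr rfl fun j _ => mul_comm _ _

lemma prod_succ_fac (K : ℕ) : ∏ j ∈ Finset.range K, (j + 1) = K.factorial := by
  induction K with
  | zero => simp
  | succ n ih => rw [Finset.prod_range_succ, ih, Nat.factorial_succ]; ring

lemma prodfac (K : ℕ) : ∏ j ∈ Finset.range K, ((K:ℚ) - (j:ℚ)) = (K.factorial : ℚ) := by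
  have h1 : ∀ j ∈ Finset.range K, ((K:ℚ) - (j:ℚ)) = ((K - j : ℕ) : ℚ) := by
    intro j hj
    rw [Nat.cast_sub (le_of_lt (Finset.mem_range.mp hj))]
  rw [Finset.prod_congr rfl h1, ← Nat.cast_prod]
  congr 1
  have := Finset.prod_range_reflect (fun j => j + 1) K
  calc ∏ j ∈ Finset.range K, (K - j)
      = ∏ j ∈ Finset.range K, ((K - 1 - j) + 1) := by
        refine Finset.prod_congr rfl fun j hj => ?_
        have := Finset.mem_range.mp hj; omega
    _ = ∏ j ∈ Finset.range K, (j + 1) := this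
    _ = K.factorial := prod_succ_fac K

lemma sumhelp (K : ℕ) : ∑ j ∈ Finset.range K, ((K:ℚ) - (j:ℚ))⁻¹
    = ∑ j ∈ Finset.range K, ((j:ℚ) + 1)⁻¹ := by
  have := Finset.sum_range_reflect (fun j => ((j:ℚ) + 1)⁻¹) K
  rw [← this]
  refine Finset.sum_congr rfl fun j hj => ?_
  have hj' := Finset.mem_range.mp hj
  congr 1
  have : (K - 1 - j : ℕ) = K - (j+1) := by omega
  rw [this]
  push_cast [Nat.cast_sub (by omega : j + 1 ≤ K)]
  ring

lemma tsplit (k : ℕ) : (Finset.range (2*(k+1))).erase k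
    = Finset.range k ∪ Finset.Ico (k+1) (2*(k+1)) := by
  ext i
  simp only [Finset.mem_erase, Finset.mem_range, Finset.mem_union, Finset.mem_Ico]
  omega

lemma prodA (k : ℕ) : ∏ j ∈ (Finset.range (2*(k+1))).erase k, ((k:ℚ) - (j:ℚ))
    = (-1)^(k+1) * (k.factorial : ℚ) * ((k+1).factorial : ℚ) := by
  rw [tsplit, Finset.prod_union (by
    simp only [Finset.disjoint_left, Finset.mem_range, Finset.mem_Ico]; omega)]
  have h1 : ∏ j ∈ Finset.range k, ((k:ℚ) - (j:ℚ)) = (k.factorial : ℚ) := prodfac k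
  have h2 : ∏ j ∈ Finset.Ico (k+1) (2*(k+1)), ((k:ℚ) - (j:ℚ))
      = (-1)^(k+1) * ((k+1).factorial : ℚ) := by
    rw [Finset.prod_Ico_eq_prod_range]
    have hsz : 2*(k+1) - (k+1) = k+1 := by omega
    rw [hsz]
    have : ∀ r ∈ Finset.range (k+1), ((k:ℚ) - ((k+1+r : ℕ):ℚ)) = (-1) * ((r:ℚ)+1) := by
      intro r _; push_cast; ring
    rw [Finset.prod_congr rfl this, Finset.prod_mul_distrib, Finset.prod_const]
    have : ∏ r ∈ Finset.range (k+1), ((r:ℚ)+1) = (((k+1).factorial : ℕ) : ℚ) := by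
      rw [← prod_succ_fac (k+1)]; push_cast; rfl
    rw [this, Finset.card_range]
  rw [h1, h2]; ring

lemma sumS (k : ℕ) : ∑ i ∈ (Finset.range (2*(k+1))).erase k, ((k:ℚ) - (i:ℚ))⁻¹
    = - ((k:ℚ)+1)⁻¹ := by
  rw [tsplit, Finset.sum_union (by
    simp only [Finset.disjoint_left, Finset.mem_range, Finset.mem_Ico]; omega)]
  have h1 : ∑ j ∈ Finset.range k, ((k:ℚ) - (j:ℚ))⁻¹
      = ∑ j ∈ Finset.range k, ((j:ℚ)+1)⁻¹ := sumhelp k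
  have h2 : ∑ i ∈ Finset.Ico (k+1) (2*(k+1)), ((k:ℚ) - (i:ℚ))⁻¹
      = - ∑ r ∈ Finset.range (k+1), ((r:ℚ)+1)⁻¹ := by
    rw [Finset.sum_Ico_eq_sum_range]
    have hsz : 2*(k+1) - (k+1) = k+1 := by omega
    rw [hsz, ← Finset.sum_neg_distrib]
    · refine Finset.sum_congr rfl fun r _ => ?_
      have : ((k:ℚ) - ((k+1+r : ℕ):ℚ)) = -((r:ℚ)+1) := by push_cast; ring
      rw [this, ← neg_inv]
  rw [h1, h2, Finset.sum_range_succ]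
  ring

lemma aQtop (m : ℕ) (hm : 1 ≤ m) :
    aQ m (2*m) = (-1)^(m+1) * 2 * (((m-1).factorial : ℚ))^2 / ((2*m).factorial : ℚ) := by
  obtain ⟨k, rfl⟩ : ∃ k, m = k + 1 := ⟨m-1, by omega⟩
  simp only [Nat.add_sub_cancel]
  set M := 2*(k+1) with hM
  have hx0 : ((k+1 : ℕ):ℚ) - 1 = (k:ℚ) := by push_cast; ring
  have herase : (Finset.range (M+1)).erase M = Finset.range M := by
    rw [Finset.range_add_one, Finset.erase_insert (by simp)]
  have hb : Lagrange.basis (Finset.range (M+1)) (Nat.cast : ℕ → ℚ) M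
      = C (((M.factorial : ℚ))⁻¹) * ∏ j ∈ Finset.range M, (X - C (j:ℚ)) := by
    rw [Lagrange.basis, herase]
    simp only [Lagrange.basisDivisor]
    rw [Finset.prod_mul_distrib, ← map_prod, Finset.prod_inv_distrib, prodfac]
  set W' : ℚ[X] := ∏ j ∈ (Finset.range M).erase k, (X - C (j:ℚ)) with hW'
  have hkmem : k ∈ Finset.range M := Finset.mem_range.mpr (by omega)
  have hW : (∏ j ∈ Finset.range M, (X - C (j:ℚ))) = (X - C (k:ℚ)) * W' :=
    (Finset.mul_prod_erase _ _ hkmem).symm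
  have hDD : Polynomial.derivative (Polynomial.derivative
        (∏ j ∈ Finset.range M, (X - C (j:ℚ))))
      = 2 * Polynomial.derivative W' + (X - C (k:ℚ)) *
          Polynomial.derivative (Polynomial.derivative W') := by
    rw [hW]
    simp only [Polynomial.derivative_mul, Polynomial.derivative_sub, Polynomial.derivative_add,
      Polynomial.derivative_X, Polynomial.derivative_C,
      Polynomial.derivative_one, Polynomial.derivative_zero]
    ring
  have hA : ∏ j ∈ (Finset.range M).erase k, ((k:ℚ) - (j:ℚ))
      = (-1)^(k+1) * (k.factorial : ℚ) * ((k+1).factorial : ℚ) := prodA k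
  have hevalDW' : Polynomial.eval (k:ℚ) (Polynomial.derivative W')
      = ((-1)^(k+1) * (k.factorial : ℚ) * ((k+1).factorial : ℚ)) * (- ((k:ℚ)+1)⁻¹) := by
    have hnod : W' = Lagrange.nodal ((Finset.range M).erase k) (Nat.cast : ℕ → ℚ) := by
      rw [Lagrange.nodal_eq]
    rw [hnod, Lagrange.derivative_nodal, Polynomial.eval_finset_sum]
    have hterm : ∀ i ∈ (Finset.range M).erase k,
        Polynomial.eval (k:ℚ)
            (Lagrange.nodal (((Finset.range M).erase k).erase i) (Nat.cast : ℕ → ℚ))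
        = ((k:ℚ) - (i:ℚ))⁻¹ * ((-1)^(k+1) * (k.factorial : ℚ) * ((k+1).factorial : ℚ)) := by
      intro i hi
      have hne : (k:ℚ) - (i:ℚ) ≠ 0 := by
        have : i ≠ k := (Finset.mem_erase.mp hi).1
        intro h
        exact this (Nat.cast_injective (by linarith : (i:ℚ) = (k:ℚ)))
      have hmp := Finset.mul_prod_erase ((Finset.range M).erase k)
        (fun j => ((k:ℚ) - (j:ℚ))) hi
      rw [Lagrange.eval_nodal]
      rw [← hA, ← hmp]
      field_simp
    rw [Finset.sum_congr rfl hterm, ← Finset.sum_mul, sumS k]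
    ring
  unfold aQ
  rw [hx0, ← hM, hb]
  simp only [Polynomial.derivative_C_mul, Polynomial.eval_mul, Polynomial.eval_C]
  rw [hDD]
  simp only [Polynomial.eval_add, Polynomial.eval_mul, Polynomial.eval_sub,
    Polynomial.eval_X, Polynomial.eval_C, Polynomial.eval_ofNat, sub_self, zero_mul, add_zero]
  rw [hevalDW']
  have hfac : ((k+1).factorial : ℚ) = ((k+1):ℚ) * (k.factorial : ℚ) := by
    rw [Nat.factorial_succ]; push_cast; ring
  have hk1 : ((k:ℚ)+1) ≠ 0 := by positivity
  have hMfac : ((M.factorial : ℚ)) ≠ 0 := by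
    exact_mod_cast Nat.cast_ne_zero.mpr (Nat.factorial_ne_zero M)
  rw [hfac]
  field_simp [hfac]
  ring

end Interp


section PS
open PowerSeries

noncomputable section
namespace GB

local notation "e" => PowerSeries.exp ℚ
local notation "B" => bernoulliPowerSeries ℚ

lemma mkBernoulli : (PowerSeries.mk fun k => bernoulli k / (k.factorial : ℚ)) = B := by
  ext n
  simp [bernoulliPowerSeries, coeff_mk]

lemma mkExp (t : ℚ) : (PowerSeries.mk fun k => t ^ k / (k.factorial : ℚ)) = rescale t e := by
  ext n
  simp [coeff_rescale, coeff_exp, div_eq_mul_inv, mul_comm]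

lemma mkExpPow (j : ℕ) : (PowerSeries.mk fun k => (j:ℚ) ^ k / (k.factorial : ℚ)) = e ^ j := by
  rw [mkExp, exp_pow_eq_rescale_exp]

lemma exp_sub_one_ne : (e - 1 : ℚ⟦X⟧) ≠ 0 := by
  intro h
  have := congrArg (PowerSeries.coeff (R := ℚ) 1) h
  simp [coeff_exp] at this

lemma deriv_exp : PowerSeries.derivative ℚ e = e := by
  ext n
  rw [PowerSeries.coeff_derivative, coeff_exp, coeff_exp]
  simp only [map_div₀, map_one, map_natCast]
  field_simp [Nat.factorial_succ]
  push_cast [Nat.factorial_succ]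
  ring

end GB

namespace GB2
open GB
local notation "e" => PowerSeries.exp ℚ
local notation "B" => bernoulliPowerSeries ℚ
local notation "D" => PowerSeries.derivative ℚ

lemma key (n : ℕ) (hn : 1 ≤ n) : PowerSeries.coeff (R := ℚ) n (e * B ^ (n+1)) = 0 := by
  have hB : B * (e - 1) = (X : ℚ⟦X⟧) := bernoulliPowerSeries_mul_exp_sub_one ℚ
  have h1 : B ^ n * (e - 1) ^ n = (X : ℚ⟦X⟧) ^ n := by rw [← mul_pow, hB]
  have hD1 : D ((e : ℚ⟦X⟧) - 1) = e := by simp [GB.deriv_exp]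
  have h2 := congrArg D h1
  simp only [Derivation.leibniz, Derivation.leibniz_pow, hD1, PowerSeries.derivative_X,
    smul_eq_mul, nsmul_eq_mul, mul_one] at h2
  obtain ⟨k, rfl⟩ : ∃ k, n = k + 1 := ⟨n - 1, (Nat.succ_pred_eq_of_pos hn).symm⟩
  simp only [Nat.add_sub_cancel] at h2
  set N : ℚ⟦X⟧ := ((k+1 : ℕ) : ℚ⟦X⟧) with hN
  have hT : (N * (X * (B ^ k * D B))) * (e-1)^(k+2)
      = (N * B^(k+1) - N * (e * B^(k+2))) * (e-1)^(k+2) := by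
    linear_combination (X*(e-1)) * h2 + (- N*(e-1)) * h1
      + (N * e * B^(k+1) * (e-1)^(k+1)) * hB
  have hcancel : N * (X * (B ^ k * D B)) = N * B^(k+1) - N * (e * B^(k+2)) :=
    mul_right_cancel₀ (pow_ne_zero _ GB.exp_sub_one_ne) hT
  have hco := congrArg (PowerSeries.coeff (R := ℚ) (k+1)) hcancel
  have hNc : ∀ f : ℚ⟦X⟧, PowerSeries.coeff (R := ℚ) (k+1) (N * f)
      = ((k+1 : ℕ) : ℚ) * PowerSeries.coeff (R := ℚ) (k+1) f := by
    intro f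
    rw [hN, ← map_natCast (PowerSeries.C (R := ℚ)) (k+1), PowerSeries.coeff_C_mul]
  rw [map_sub, hNc, hNc, hNc, PowerSeries.coeff_succ_X_mul] at hco
  have hpow : PowerSeries.coeff (R := ℚ) k (B ^ k * D B)
      = PowerSeries.coeff (R := ℚ) (k+1) (B ^ (k+1)) := by
    have hl : D (B ^ (k+1)) = (k+1 : ℕ) • (B ^ k * D B) := by
      simpa [smul_eq_mul, Nat.add_sub_cancel, mul_comm] using
        (Derivation.leibniz_pow (R := ℚ) (a := B) (k+1) : _)
    have hcc := congrArg (PowerSeries.coeff (R := ℚ) k) hl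
    rw [PowerSeries.coeff_derivative, nsmul_eq_mul,
      ← map_natCast (PowerSeries.C (R := ℚ)) (k+1), PowerSeries.coeff_C_mul] at hcc
    have hk1 : ((k+1 : ℕ) : ℚ) ≠ 0 := by positivity
    exact mul_left_cancel₀ hk1 (by push_cast at hcc ⊢; linarith)
  rw [hpow] at hco
  have hk1 : ((k+1 : ℕ) : ℚ) ≠ 0 := by positivity
  have : ((k+1 : ℕ) : ℚ) * PowerSeries.coeff (R := ℚ) (k+1) (e * B ^ (k+1+1)) = 0 := by linarith
  exact (mul_eq_zero.mp this).resolve_left hk1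

end GB2
end
end PS


noncomputable section MainAux
namespace GB3
open PowerSeries Finset GB GB2

local notation "e" => PowerSeries.exp ℚ
local notation "B" => bernoulliPowerSeries ℚ

lemma exp_pow_eq_sum (k j : ℕ) (hj : j ≤ 2*k+2) :
    (e : ℚ⟦X⟧)^j = ∑ kk ∈ Finset.range (2*k+3),
      PowerSeries.C (R := ℚ) ((j.choose kk : ℕ):ℚ) * ((e : ℚ⟦X⟧) - 1)^kk := by
  have h1 : (e : ℚ⟦X⟧)^j = (((e : ℚ⟦X⟧) - 1) + 1)^j := by ring_nf
  rw [h1, add_pow]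
  rw [← Finset.sum_subset (Finset.range_subset_range.mpr (by omega : j + 1 ≤ 2*k+3))]
  · refine Finset.sum_congr rfl fun i _ => ?_
    rw [one_pow, mul_one, ← map_natCast (PowerSeries.C (R := ℚ)) (j.choose i), mul_comm]
  · intro x _ hx
    rw [Nat.choose_eq_zero_of_lt (by simpa using hx)]
    simp

/-- coefficients of the expansion in powers of `exp - 1` -/
def qq (k kk : ℕ) : ℚ := ∑ j ∈ Finset.range (2*k+3), aQ (k+1) j * (j.choose kk : ℚ)

lemma stepA (k : ℕ) :
    (∑ kk ∈ Finset.range (2*k+3), PowerSeries.C (R := ℚ) (qq k kk) * ((e : ℚ⟦X⟧) - 1)^kk)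
      = ∑ j ∈ Finset.range (2*k+3), PowerSeries.C (R := ℚ) (aQ (k+1) j) * (e : ℚ⟦X⟧)^j := by
  have : ∀ j ∈ Finset.range (2*k+3),
      PowerSeries.C (R := ℚ) (aQ (k+1) j) * (e : ℚ⟦X⟧)^j
        = ∑ kk ∈ Finset.range (2*k+3),
            PowerSeries.C (R := ℚ) (aQ (k+1) j * (j.choose kk : ℚ)) * ((e : ℚ⟦X⟧) - 1)^kk := by
    intro j hj
    rw [exp_pow_eq_sum k j (by simpa using Nat.lt_succ_iff.mp (Finset.mem_range.mp hj)),
      Finset.mul_sum]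
    refine Finset.sum_congr rfl fun i _ => ?_
    rw [map_mul]
    ring
  rw [Finset.sum_congr rfl this, Finset.sum_comm]
  refine Finset.sum_congr rfl fun kk _ => ?_
  rw [qq, ← Finset.sum_mul, ← map_sum]

lemma coeff_exp_pow (j n : ℕ) :
    PowerSeries.coeff (R := ℚ) n ((e : ℚ⟦X⟧)^j) = (j:ℚ)^n / (n.factorial : ℚ) := by
  rw [exp_pow_eq_rescale_exp, coeff_rescale, coeff_exp]
  simp [div_eq_mul_inv]

lemma hR (k n : ℕ) (hn : n ≤ 2*k+2) :
    PowerSeries.coeff (R := ℚ) n ((X:ℚ⟦X⟧)^2 * (e : ℚ⟦X⟧)^k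
      - ∑ kk ∈ Finset.range (2*k+3), PowerSeries.C (R := ℚ) (qq k kk) * ((e : ℚ⟦X⟧) - 1)^kk) = 0 := by
  rw [map_sub, stepA, map_sum]
  have hsum : ∑ j ∈ Finset.range (2*k+3),
      PowerSeries.coeff (R := ℚ) n (PowerSeries.C (R := ℚ) (aQ (k+1) j) * (e : ℚ⟦X⟧)^j)
      = (∑ j ∈ Finset.range (2*k+3), aQ (k+1) j * (j:ℚ)^n) / (n.factorial : ℚ) := by
    rw [Finset.sum_div]
    refine Finset.sum_congr rfl fun j _ => ?_
    rw [PowerSeries.coeff_C_mul, coeff_exp_pow]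
    ring
  have hI := interp_sum (k+1) n (by omega)
  have hrange : 2*(k+1)+1 = 2*k+3 := by ring
  rw [hrange] at hI
  rw [hsum, hI]
  rw [PowerSeries.coeff_X_pow_mul']
  match n with
  | 0 => simp
  | 1 => simp [pow_one]
  | (n'+2) =>
    rw [if_pos (by omega)]
    have hx : ((k+1 : ℕ):ℚ) - 1 = (k:ℚ) := by push_cast; ring
    have hD : Polynomial.derivative (Polynomial.derivative ((Polynomial.X:Polynomial ℚ)^(n'+2)))
        = Polynomial.C ((n'+2:ℕ):ℚ) * (Polynomial.C ((n'+1:ℕ):ℚ) * Polynomial.X^n') := by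
      rw [Polynomial.derivative_X_pow, Polynomial.derivative_C_mul, Polynomial.derivative_X_pow]
      simp
    rw [hD, hx]
    simp only [Nat.add_sub_cancel, Polynomial.eval_mul, Polynomial.eval_C,
      Polynomial.eval_pow, Polynomial.eval_X, coeff_exp_pow]
    have h1 : ((n'+2).factorial : ℚ) = (n'+2) * ((n'+1) * (n'.factorial : ℚ)) := by
      rw [Nat.factorial_succ, Nat.factorial_succ]; push_cast; ring
    have h2 : (n'.factorial : ℚ) ≠ 0 := by
      exact_mod_cast Nat.cast_ne_zero.mpr (Nat.factorial_ne_zero n')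
    rw [h1]
    field_simp
    push_cast
    ring

end GB3
end MainAux

section Main
open scoped PowerSeries
/-- For `m ≥ 1`, `B^{(2m+1)}_{2m-2}(m) = (-1)^{m+1} · 2 · (2m-2)!/(2m)! · ((m-1)!)²`. -/
theorem genBernoulli_odd_order_sub_two (m : ℕ) (hm : 1 ≤ m) :
    genBernoulli (2 * m + 1) (m : ℚ) (2 * m - 2) =
      (-1) ^ (m + 1) * 2 * (((2 * m - 2).factorial : ℚ) / ((2 * m).factorial : ℚ)) *
        (((m - 1).factorial : ℚ)) ^ 2 := by
  obtain ⟨k, rfl⟩ : ∃ k, m = k + 1 := ⟨m - 1, by omega⟩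
  have e1 : 2 * (k+1) + 1 = 2*k+3 := by ring
  have e2 : 2 * (k+1) - 2 = 2*k := by omega
  have e3 : k + 1 - 1 = k := by omega
  rw [genBernoulli, GB.mkBernoulli, e1, e2, e3]
  have e4 : (PowerSeries.mk fun kk => ((k+1 : ℕ):ℚ) ^ kk / (kk.factorial : ℚ))
      = (PowerSeries.exp ℚ) ^ (k+1) := GB.mkExpPow (k+1)
  rw [e4]
  -- notation
  set e : ℚ⟦X⟧ := PowerSeries.exp ℚ with he
  set B : ℚ⟦X⟧ := bernoulliPowerSeries ℚ with hB0
  have hBX : ∀ r : ℕ, B ^ r * (e - 1) ^ r = (PowerSeries.X : ℚ⟦X⟧) ^ r := fun r => by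
    rw [← mul_pow, bernoulliPowerSeries_mul_exp_sub_one]
  set Sq : ℚ⟦X⟧ := ∑ kk ∈ Finset.range (2*k+3),
    PowerSeries.C (R := ℚ) (GB3.qq k kk) * ((e - 1)) ^ kk with hSq
  set R : ℚ⟦X⟧ := PowerSeries.X ^ 2 * e ^ k - Sq with hRdef
  have hSR : Sq + R = PowerSeries.X ^ 2 * e ^ k := by rw [hRdef]; ring
  -- the main power series identity
  have hL : (PowerSeries.X ^ 2 * (B ^ (2*k+3) * e ^ (k+1))) * (e - 1) ^ (2*k+3)
      = PowerSeries.X ^ (2*k+3) * e * (PowerSeries.X ^ 2 * e ^ k) := by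
    calc (PowerSeries.X ^ 2 * (B ^ (2*k+3) * e ^ (k+1))) * (e - 1) ^ (2*k+3)
        = (B ^ (2*k+3) * (e-1) ^ (2*k+3)) * (PowerSeries.X ^ 2 * e ^ (k+1)) := by ring
      _ = PowerSeries.X ^ (2*k+3) * (PowerSeries.X ^ 2 * e ^ (k+1)) := by rw [hBX]
      _ = PowerSeries.X ^ (2*k+3) * e * (PowerSeries.X ^ 2 * e ^ k) := by ring
  have hRhs : ((∑ kk ∈ Finset.range (2*k+3), PowerSeries.C (R := ℚ) (GB3.qq k kk) *
        (PowerSeries.X ^ kk * (B ^ (2*k+3-kk) * e))) + B ^ (2*k+3) * e * R) * (e - 1) ^ (2*k+3)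
      = PowerSeries.X ^ (2*k+3) * e * (PowerSeries.X ^ 2 * e ^ k) := by
    rw [add_mul, Finset.sum_mul]
    have hterm : ∀ kk ∈ Finset.range (2*k+3),
        (PowerSeries.C (R := ℚ) (GB3.qq k kk) * (PowerSeries.X ^ kk * (B ^ (2*k+3-kk) * e)))
            * (e - 1) ^ (2*k+3)
        = PowerSeries.X ^ (2*k+3) * e * (PowerSeries.C (R := ℚ) (GB3.qq k kk) * (e-1) ^ kk) := by
      intro kk hkk
      have hkk' : kk ≤ 2*k+2 := by
        have := Finset.mem_range.mp hkk; omega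
      set r : ℕ := 2*k+3-kk with hr0
      have hr : r + kk = 2*k+3 := by omega
      calc (PowerSeries.C (R := ℚ) (GB3.qq k kk) * (PowerSeries.X ^ kk * (B ^ r * e)))
              * (e - 1) ^ (2*k+3)
          = (B ^ r * (e-1) ^ r) * (PowerSeries.C (R := ℚ) (GB3.qq k kk) *
              (PowerSeries.X ^ kk * e * (e-1) ^ kk)) := by rw [← hr, pow_add]; ring
        _ = PowerSeries.X ^ r * (PowerSeries.C (R := ℚ) (GB3.qq k kk) *
              (PowerSeries.X ^ kk * e * (e-1) ^ kk)) := by rw [hBX]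
        _ = PowerSeries.X ^ (r + kk) * e * (PowerSeries.C (R := ℚ) (GB3.qq k kk) * (e-1) ^ kk) := by
              rw [pow_add]; ring
        _ = PowerSeries.X ^ (2*k+3) * e * (PowerSeries.C (R := ℚ) (GB3.qq k kk) * (e-1) ^ kk) := by
              rw [hr]
    rw [Finset.sum_congr rfl hterm, ← Finset.mul_sum, ← hSq]
    have hlast : B ^ (2*k+3) * e * R * (e - 1) ^ (2*k+3)
        = PowerSeries.X ^ (2*k+3) * e * R := by
      calc B ^ (2*k+3) * e * R * (e - 1) ^ (2*k+3)
          = (B ^ (2*k+3) * (e-1) ^ (2*k+3)) * (e * R) := by ring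
        _ = PowerSeries.X ^ (2*k+3) * (e * R) := by rw [hBX]
        _ = PowerSeries.X ^ (2*k+3) * e * R := by ring
    rw [hlast, ← hSR]
    ring
  have hmain : PowerSeries.X ^ 2 * (B ^ (2*k+3) * e ^ (k+1))
      = (∑ kk ∈ Finset.range (2*k+3), PowerSeries.C (R := ℚ) (GB3.qq k kk) *
          (PowerSeries.X ^ kk * (B ^ (2*k+3-kk) * e))) + B ^ (2*k+3) * e * R :=
    mul_right_cancel₀ (pow_ne_zero _ GB.exp_sub_one_ne) (hL.trans hRhs.symm)
  -- take coefficient 2k+2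
  have hco := congrArg (PowerSeries.coeff (R := ℚ) (2*k+2)) hmain
  rw [show 2*k+2 = 2*k + 2 from rfl] at hco
  rw [PowerSeries.coeff_X_pow_mul (B ^ (2*k+3) * e ^ (k+1)) 2 (2*k)] at hco
  rw [map_add, map_sum] at hco
  have hterm2 : ∀ kk ∈ Finset.range (2*k+3),
      PowerSeries.coeff (R := ℚ) (2*k+2) (PowerSeries.C (R := ℚ) (GB3.qq k kk) *
          (PowerSeries.X ^ kk * (B ^ (2*k+3-kk) * e)))
      = GB3.qq k kk * PowerSeries.coeff (R := ℚ) (2*k+2-kk) (B ^ (2*k+3-kk) * e) := by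
    intro kk hkk
    have hkk' : kk ≤ 2*k+2 := by have := Finset.mem_range.mp hkk; omega
    rw [PowerSeries.coeff_C_mul, PowerSeries.coeff_X_pow_mul', if_pos hkk']
  rw [Finset.sum_congr rfl hterm2, Finset.sum_range_succ] at hco
  have hzero : ∀ kk ∈ Finset.range (2*k+2),
      GB3.qq k kk * PowerSeries.coeff (R := ℚ) (2*k+2-kk) (B ^ (2*k+3-kk) * e) = 0 := by
    intro kk hkk
    have hkk' : kk < 2*k+2 := Finset.mem_range.mp hkk
    have hs : 2*k+3-kk = (2*k+2-kk) + 1 := by omega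
    rw [hs, mul_comm (B ^ ((2*k+2-kk)+1)) e, GB2.key (2*k+2-kk) (by omega), mul_zero]
  rw [Finset.sum_eq_zero hzero, zero_add] at hco
  have hone : PowerSeries.coeff (R := ℚ) (2*k+2-(2*k+2)) (B ^ (2*k+3-(2*k+2)) * e) = 1 := by
    have h1 : 2*k+2-(2*k+2) = 0 := by omega
    have h2 : 2*k+3-(2*k+2) = 1 := by omega
    rw [h1, h2, pow_one]
    simp [PowerSeries.coeff_mul, hB0, he, bernoulliPowerSeries, PowerSeries.coeff_mk,
      PowerSeries.coeff_exp, PowerSeries.constantCoeff_exp]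
  rw [hone, mul_one] at hco
  have hRzero : PowerSeries.coeff (R := ℚ) (2*k+2) (B ^ (2*k+3) * e * R) = 0 := by
    rw [PowerSeries.coeff_mul]
    refine Finset.sum_eq_zero fun p hp => ?_
    have hp2 : p.2 ≤ 2*k+2 := by
      have := Finset.HasAntidiagonal.mem_antidiagonal.mp hp; omega
    rw [hRdef]
    rw [GB3.hR k p.2 hp2, mul_zero]
  rw [hRzero, add_zero] at hco
  -- identify qq k (2k+2) with aQ
  have h22 : (2*(k+1)) = 2*k+2 := by ring
  have hq : GB3.qq k (2*k+2) = aQ (k+1) (2*k+2) := by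
    rw [GB3.qq]
    rw [Finset.sum_eq_single_of_mem (2*k+2) (Finset.mem_range.mpr (by omega))]
    · rw [Nat.choose_self, Nat.cast_one, mul_one]
    · intro j hj hne
      have hj' : j < 2*k+2 := by
        have := Finset.mem_range.mp hj
        omega
      rw [Nat.choose_eq_zero_of_lt hj', Nat.cast_zero, mul_zero]
  have htop := aQtop (k+1) (by omega)
  rw [e3, h22] at htop
  rw [hq, htop] at hco
  rw [hco]
  have hfacne : ((2*(k+1)).factorial : ℚ) ≠ 0 :=
    Nat.cast_ne_zero.mpr (Nat.factorial_ne_zero _)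
  rw [h22] at hfacne ⊢
  field_simp

end Main
end

section
/- For every integer m ≥ 0 and complex φ with Re(φ) > 0, the hyperbolic series S_{2m+2}(φ) = Σ_{n≥1} φ^{2m+2}/sinh^{2m+2}(nφ/2) satisfies S_{2m+2}(φ) = (2φ)^{2m+2} Σ_{k≥1} C(k+m, k-m-1) · e^{-kφ}/(1 - e^{-kφ}), where C(k+m, k-m-1) is the binomial coefficient (which vanishes for 1 ≤ k ≤ m). -/
set_option maxHeartbeats 1000000

open Complex in
/-- For `m ≥ 0` and `Re φ > 0`,
`S_{2m+2}(φ) = Σ_{n≥1} φ^{2m+2}/sinh^{2m+2}(nφ/2)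
             = (2φ)^{2m+2} Σ_{k≥1} C(k+m, k-m-1) e^{-kφ}/(1-e^{-kφ})`,
the binomial coefficient vanishing for `1 ≤ k ≤ m`. -/
theorem hyperbolicSeries_eq_binom_exp_sum (m : ℕ) (φ : ℂ) (hφ : 0 < φ.re) :
    ∑' n : ℕ, φ ^ (2 * m + 2) / Complex.sinh (((n + 1 : ℕ) : ℂ) * φ / 2) ^ (2 * m + 2) =
      (2 * φ) ^ (2 * m + 2) *
        ∑' k : ℕ,
          (if m + 1 ≤ k + 1 then (((k + 1 + m).choose (k - m) : ℕ) : ℂ) else 0) *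
              Complex.exp (-((k + 1 : ℕ) : ℂ) * φ) /
            (1 - Complex.exp (-((k + 1 : ℕ) : ℂ) * φ)) := by
  set N := 2 * m + 2 with hN
  set q : ℂ := Complex.exp (-φ) with hqdef
  have hq : ‖q‖ < 1 := by
    rw [hqdef, Complex.norm_exp]
    exact Real.exp_lt_one_iff.mpr (by simpa using hφ)
  have hq0 : (0:ℝ) ≤ ‖q‖ := norm_nonneg _
  have hqpow : ∀ j : ℕ, ‖q ^ (j+1)‖ < 1 := by
    intro j
    rw [norm_pow]
    exact pow_lt_one₀ hq0 hq (Nat.succ_ne_zero j)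
  have h1q : ∀ j : ℕ, (1 : ℂ) - q ^ (j+1) ≠ 0 := by
    intro j h
    have h2 : q ^ (j+1) = 1 := by linear_combination -h
    have := hqpow j
    rw [h2] at this
    simp at this
  -- the double family
  set F : ℕ × ℕ → ℂ := fun p =>
    (((p.2 + 1 + m).choose (2*m+1) : ℕ) : ℂ) * q ^ ((p.1+1) * (p.2+1)) with hF
  -- norm summability
  have hBsum : Summable (fun k : ℕ => (((k + 1 + m).choose (2*m+1) : ℕ) : ℝ) * ‖q‖ ^ (k+1)) := by
    have h1 : ‖(‖q‖)‖ < 1 := by rwa [Real.norm_eq_abs, _root_.abs_of_nonneg hq0]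
    have := (summable_choose_mul_geometric_of_norm_lt_one (R := ℝ) (2*m+1) h1).mul_left ‖q‖
    refine this.of_nonneg_of_le (fun k => by positivity) (fun k => ?_)
    rw [pow_succ]
    have hc : ((k + 1 + m).choose (2*m+1) : ℝ) ≤ ((k + (2*m+1)).choose (2*m+1) : ℝ) := by
      exact_mod_cast Nat.choose_le_choose _ (by omega)
    calc ((k + 1 + m).choose (2*m+1) : ℝ) * (‖q‖ ^ k * ‖q‖)
        ≤ ((k + (2*m+1)).choose (2*m+1) : ℝ) * (‖q‖ ^ k * ‖q‖) := by
          apply mul_le_mul_of_nonneg_right hc (by positivity)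
      _ = ‖q‖ * (((k + (2*m+1)).choose (2*m+1) : ℝ) * ‖q‖ ^ k) := by ring
  have hFnorm : Summable (fun p : ℕ × ℕ => ‖F p‖) := by
    have hA : Summable (fun n : ℕ => ‖q‖ ^ n) := summable_geometric_of_lt_one hq0 hq
    have hprod := hA.mul_of_nonneg hBsum (fun n => by positivity) (fun k => by positivity)
    refine hprod.of_nonneg_of_le (fun p => norm_nonneg _) (fun p => ?_)
    obtain ⟨n, k⟩ := p
    simp only [hF, norm_mul, norm_pow, Complex.norm_natCast]
    have h1 : ‖q‖ ^ ((n+1) * (k+1)) ≤ ‖q‖ ^ (n + (k+1)) :=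
      pow_le_pow_of_le_one hq0 hq.le (by nlinarith)
    calc (((k + 1 + m).choose (2*m+1) : ℕ) : ℝ) * ‖q‖ ^ ((n+1)*(k+1))
        ≤ (((k + 1 + m).choose (2*m+1) : ℕ) : ℝ) * ‖q‖ ^ (n + (k+1)) := by
          exact mul_le_mul_of_nonneg_left h1 (by positivity)
      _ = ‖q‖ ^ n * ((((k + 1 + m).choose (2*m+1) : ℕ) : ℝ) * ‖q‖ ^ (k+1)) := by
          rw [pow_add]; ring
  have hFsum : Summable F := hFnorm.of_norm
  have hrow : ∀ n : ℕ, HasSum (fun k => F (n, k))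
      ((q^(n+1))^(m+1) / (1 - q^(n+1))^(2*m+2)) := by
    intro n
    have hr : ‖q^(n+1)‖ < 1 := hqpow n
    have H := (hasSum_choose_mul_geometric_of_norm_lt_one (𝕜 := ℂ) (2*m+1) hr).mul_left
      ((q^(n+1))^(m+1))
    refine (Function.Injective.hasSum_iff (g := fun j => j + m) (add_left_injective m) ?_).mp ?_
    · intro k hk
      have hkm : k < m := by
        by_contra h
        exact hk ⟨k - m, by simp only []; omega⟩
      simp only [hF]
      rw [Nat.choose_eq_zero_of_lt (by omega)]
      simp
    · convert H using 1
      · rfl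
      · funext j
        simp only [hF, Function.comp]
        rw [show (j + m + 1 + m) = j + (2*m+1) by omega]
        rw [show (n+1) * (j + m + 1) = (n+1)*(m+1) + (n+1)*j by ring, pow_add, pow_mul, pow_mul]
        ring
      · rw [mul_one_div, show 2*m+1+1 = 2*m+2 by omega]
  have hcol : ∀ k : ℕ, HasSum (fun n => F (n, k))
      ((((k+1+m).choose (2*m+1) : ℕ) : ℂ) * (q^(k+1) / (1 - q^(k+1)))) := by
    intro k
    have hx : ‖q^(k+1)‖ < 1 := hqpow k
    have H := (hasSum_geometric_of_norm_lt_one hx).mul_left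
      ((((k+1+m).choose (2*m+1) : ℕ) : ℂ) * q^(k+1))
    convert H using 1
    · rfl
    · funext n
      simp only [hF]
      rw [show (n+1)*(k+1) = (k+1) + (k+1)*n by ring, pow_add, pow_mul]
      ring
    · rw [div_eq_mul_inv]; ring
  have hswap : ∑' n, ∑' k, F (n, k) = ∑' k, ∑' n, F (n, k) :=
    (Summable.tsum_comm' (f := fun (n k : ℕ) => F (n, k)) (by exact hFsum)
      (fun n => (hrow n).summable) (fun k => (hcol k).summable)).symm
  have hterm : ∀ n : ℕ, φ^(2*m+2) / Complex.sinh (((n+1:ℕ):ℂ) * φ / 2) ^ (2*m+2)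
      = (2*φ)^(2*m+2) * ((q^(n+1))^(m+1) / (1 - q^(n+1))^(2*m+2)) := by
    intro n
    have hq' : q^(n+1) = Complex.exp (-(((n+1:ℕ):ℂ) * φ)) := by
      rw [hqdef, ← Complex.exp_nat_mul]
      congr 1
      push_cast
      ring
    have hexpneg : Complex.exp (-(((n+1:ℕ):ℂ) * φ / 2))
        = Complex.exp (((n+1:ℕ):ℂ) * φ / 2) * q^(n+1) := by
      rw [hq', ← Complex.exp_add]
      congr 1
      ring
    have hsinh : Complex.sinh (((n+1:ℕ):ℂ) * φ / 2)
        = Complex.exp (((n+1:ℕ):ℂ) * φ / 2) * (1 - q^(n+1)) / 2 := by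
      have h2s := Complex.two_sinh (((n+1:ℕ):ℂ) * φ / 2)
      rw [eq_div_iff (two_ne_zero (α := ℂ))]
      linear_combination h2s - hexpneg
    have hez : Complex.exp (((n+1:ℕ):ℂ) * φ / 2) ≠ 0 := Complex.exp_ne_zero _
    have hone : Complex.exp (((n+1:ℕ):ℂ) * φ / 2) ^ (2*m+2) * (q^(n+1))^(m+1) = 1 := by
      rw [hq', ← Complex.exp_nat_mul, ← Complex.exp_nat_mul, ← Complex.exp_add,
        ← Complex.exp_zero]
      congr 1
      push_cast
      ring
    have h1 : (1:ℂ) - q^(n+1) ≠ 0 := h1q n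
    rw [hsinh, div_pow, mul_pow]
    rw [div_eq_iff (div_ne_zero (mul_ne_zero (pow_ne_zero _ hez) (pow_ne_zero _ h1))
      (pow_ne_zero _ (two_ne_zero (α := ℂ))))]
    generalize hE : Complex.exp (((n+1:ℕ):ℂ) * φ / 2) = E at hone ⊢
    generalize hQ : q ^ (n+1) = Q at hone h1 ⊢
    have hA : (1 - Q)^(2*m+2) * ((1 - Q)^(2*m+2))⁻¹ = 1 := mul_inv_cancel₀ (pow_ne_zero _ h1)
    have hB : (2:ℂ)^(2*m+2) * ((2:ℂ)^(2*m+2))⁻¹ = 1 := mul_inv_cancel₀ (pow_ne_zero _ two_ne_zero)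
    linear_combination (-φ^(2*m+2)) * hB - φ^(2*m+2) * ((2:ℂ)^(2*m+2) * ((2:ℂ)^(2*m+2))⁻¹) * hone - φ^(2*m+2) * ((2:ℂ)^(2*m+2) * ((2:ℂ)^(2*m+2))⁻¹) * (E^(2*m+2) * Q^(m+1)) * hA
  have hterm2 : ∀ k : ℕ,
      (if m + 1 ≤ k + 1 then (((k + 1 + m).choose (k - m) : ℕ) : ℂ) else 0) *
          Complex.exp (-((k + 1 : ℕ) : ℂ) * φ) / (1 - Complex.exp (-((k + 1 : ℕ) : ℂ) * φ))
        = (((k+1+m).choose (2*m+1) : ℕ) : ℂ) * (q^(k+1) / (1 - q^(k+1))) := by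
    intro k
    have hqe : Complex.exp (-((k + 1 : ℕ) : ℂ) * φ) = q^(k+1) := by
      rw [hqdef, ← Complex.exp_nat_mul]
      congr 1
      push_cast
      ring
    rw [hqe]
    by_cases h : m + 1 ≤ k + 1
    · rw [if_pos h]
      have hcs : (k+1+m).choose (k-m) = (k+1+m).choose (2*m+1) := by
        rw [← Nat.choose_symm (show 2*m+1 ≤ k+1+m by omega)]
        congr 1
        omega
      rw [hcs, mul_div_assoc]
    · rw [if_neg h]
      rw [Nat.choose_eq_zero_of_lt (by omega)]
      simp
  calc ∑' n : ℕ, φ ^ (2 * m + 2) / Complex.sinh (((n + 1 : ℕ) : ℂ) * φ / 2) ^ (2 * m + 2)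
      = ∑' n : ℕ, (2*φ)^(2*m+2) * ((q^(n+1))^(m+1) / (1 - q^(n+1))^(2*m+2)) :=
        tsum_congr hterm
    _ = ∑' n : ℕ, (2*φ)^(2*m+2) * ∑' k : ℕ, F (n, k) := by
        exact tsum_congr fun n => by rw [(hrow n).tsum_eq]
    _ = (2*φ)^(2*m+2) * ∑' n : ℕ, ∑' k : ℕ, F (n, k) := tsum_mul_left
    _ = (2*φ)^(2*m+2) * ∑' k : ℕ, ∑' n : ℕ, F (n, k) := by rw [hswap]
    _ = (2*φ)^(2*m+2) * ∑' k : ℕ,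
          (((k+1+m).choose (2*m+1) : ℕ) : ℂ) * (q^(k+1) / (1 - q^(k+1))) := by
        rw [tsum_congr fun k => (hcol k).tsum_eq]
    _ = _ := by rw [tsum_congr hterm2]
end

section
/- For every integer m ≥ 0, B_2^{(2m+2)}(m+1) = -(m+1)/6 and B_4^{(2m+2)}(m+1) = (5m² + 11m + 6)/60. -/
open PowerSeries

noncomputable def fB : PowerSeries ℚ := PowerSeries.mk fun k => bernoulli k / (k.factorial : ℚ)

lemma coeff_fB (n : ℕ) : coeff (R := ℚ) n fB = bernoulli n / (n.factorial : ℚ) := by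
  simp [fB]

lemma b0 : coeff (R := ℚ) 0 fB = 1 := by simp [coeff_fB]
lemma b1 : coeff (R := ℚ) 1 fB = -1/2 := by simp [coeff_fB]
lemma b2 : coeff (R := ℚ) 2 fB = 1/12 := by
  rw [coeff_fB, bernoulli_eq_bernoulli'_of_ne_one (by norm_num), bernoulli'_two]
  norm_num [Nat.factorial]
lemma b3 : coeff (R := ℚ) 3 fB = 0 := by
  rw [coeff_fB, bernoulli_eq_bernoulli'_of_ne_one (by norm_num), bernoulli'_three]
  norm_num
lemma b4 : coeff (R := ℚ) 4 fB = -1/720 := by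
  rw [coeff_fB, bernoulli_eq_bernoulli'_of_ne_one (by norm_num), bernoulli'_four]
  norm_num [Nat.factorial]

lemma c0 (M : ℕ) : coeff (R := ℚ) 0 (fB ^ M) = 1 := by
  induction M with
  | zero => simp
  | succ M ih => rw [pow_succ, coeff_mul]; simp [ih, b0]

lemma c1 (M : ℕ) : coeff (R := ℚ) 1 (fB ^ M) = -(M : ℚ)/2 := by
  induction M with
  | zero => simp
  | succ M ih =>
    rw [pow_succ, coeff_mul, Finset.Nat.sum_antidiagonal_eq_sum_range_succ_mk]
    simp [Finset.sum_range_succ, ih, b0, b1, c0]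
    push_cast; ring

lemma c2 (M : ℕ) : coeff (R := ℚ) 2 (fB ^ M) = (3*(M:ℚ)^2 - M)/24 := by
  induction M with
  | zero => simp
  | succ M ih =>
    rw [pow_succ, coeff_mul, Finset.Nat.sum_antidiagonal_eq_sum_range_succ_mk]
    simp [Finset.sum_range_succ, ih, b0, b1, b2, c0, c1]
    push_cast; ring

lemma c3 (M : ℕ) : coeff (R := ℚ) 3 (fB ^ M) = -(M:ℚ)^2*(M-1)/48 := by
  induction M with
  | zero => simp
  | succ M ih =>
    rw [pow_succ, coeff_mul, Finset.Nat.sum_antidiagonal_eq_sum_range_succ_mk]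
    simp [Finset.sum_range_succ, ih, b0, b1, b2, b3, c0, c1, c2]
    push_cast; ring

lemma c4 (M : ℕ) : coeff (R := ℚ) 4 (fB ^ M) =
    (M:ℚ)^2*((M:ℚ)-1)^2/384 - (M:ℚ)*((M:ℚ)-1)/576 - (M:ℚ)/720 := by
  induction M with
  | zero => simp
  | succ M ih =>
    rw [pow_succ, coeff_mul, Finset.Nat.sum_antidiagonal_eq_sum_range_succ_mk]
    simp [Finset.sum_range_succ, ih, b0, b1, b2, b3, b4, c0, c1, c2, c3]
    push_cast; ring

/-- `B_2^{(2m+2)}(m+1) = -(m+1)/6` and `B_4^{(2m+2)}(m+1) = (5m² + 11m + 6)/60`. -/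
theorem genBernoulli_two_and_four (m : ℕ) :
    genBernoulli (2 * m + 2) ((m : ℚ) + 1) 2 = -((m : ℚ) + 1) / 6 ∧
      genBernoulli (2 * m + 2) ((m : ℚ) + 1) 4 =
        (5 * (m : ℚ) ^ 2 + 11 * m + 6) / 60 := by
  have hfB : (PowerSeries.mk fun k => bernoulli k / (k.factorial : ℚ)) = fB := rfl
  constructor <;>
  · rw [genBernoulli, hfB, coeff_mul, Finset.Nat.sum_antidiagonal_eq_sum_range_succ_mk]
    simp [Finset.sum_range_succ, c0, c1, c2, c3, c4, Nat.factorial]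
    push_cast; ring
end

section
/- For every integer m ≥ 0, the polynomial B_{2m+2}(φ) := -2^{2m+1} Σ_{k=0}^{m+1} (2πi)^{2k} (B_{2k}/(2k)!) (B^{(2m+2)}_{2m+2-2k}(m+1)/(2m+2-2k)!) φ^{2m+2-2k} vanishes at φ = 2πi and φ = -2πi. -/
open PowerSeries Finset

noncomputable def bps : ℚ⟦X⟧ := PowerSeries.mk fun k => bernoulli k / (k.factorial : ℚ)

lemma bps_eq : bps = bernoulliPowerSeries ℚ := by
  ext n; simp [bps, bernoulliPowerSeries]

lemma bps_mul : bps * (exp ℚ - 1) = X := by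
  rw [bps_eq]; exact bernoulliPowerSeries_mul_exp_sub_one ℚ

lemma bps_derivExp : (d⁄dX ℚ) (exp ℚ) = exp ℚ := by
  ext n
  rw [PowerSeries.coeff_derivative, PowerSeries.coeff_exp, PowerSeries.coeff_exp]
  simp only [Algebra.algebraMap_self, RingHom.id_apply, Nat.factorial_succ]
  have h1 : ((n+1 : ℕ) : ℚ) ≠ 0 := by positivity
  have h2 : ((n.factorial : ℕ) : ℚ) ≠ 0 := Nat.cast_ne_zero.mpr n.factorial_ne_zero
  field_simp
  push_cast; ring

lemma X_mul_deriv : X * (d⁄dX ℚ) bps = bps - bps^2 - X * bps := by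
  have hD : (1 : ℚ⟦X⟧) = bps * exp ℚ + (exp ℚ - 1) * (d⁄dX ℚ) bps := by
    have h := Derivation.leibniz (d⁄dX ℚ) bps (exp ℚ - 1)
    rw [bps_mul] at h
    simp only [PowerSeries.derivative_X, map_sub, bps_derivExp,
      Derivation.map_one_eq_zero, sub_zero, smul_eq_mul] at h
    exact h
  have hx := bps_mul
  linear_combination (-(d⁄dX ℚ bps) - bps) * hx + (-bps) * hD

lemma X_mul_deriv_pow (p : ℕ) :
    X * (d⁄dX ℚ) (bps ^ (p+1)) =
      PowerSeries.C (R := ℚ) ((p : ℚ) + 1) * (bps^(p+1) - bps^(p+2) - X * bps^(p+1)) := by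
  have h := Derivation.leibniz_pow (d⁄dX ℚ) bps (p+1)
  rw [h]
  simp only [Nat.add_sub_cancel, smul_eq_mul, nsmul_eq_mul]
  rw [show ((p+1 : ℕ) : ℚ⟦X⟧) = PowerSeries.C (R := ℚ) ((p:ℚ)+1) by
    rw [← map_natCast (PowerSeries.C (R := ℚ)) (p+1)]; push_cast; rfl]
  linear_combination (PowerSeries.C (R := ℚ) ((p:ℚ)+1)) * bps^p * X_mul_deriv

lemma coeff_bps_pow (n : ℕ) : PowerSeries.coeff n (bps ^ (n+1)) = (-1)^n := by
  induction n with
  | zero => simp [bps]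
  | succ p ih =>
    have h := congrArg (PowerSeries.coeff (p+1)) (X_mul_deriv_pow p)
    rw [PowerSeries.coeff_succ_X_mul, PowerSeries.coeff_derivative,
      PowerSeries.coeff_C_mul] at h
    simp only [map_sub, PowerSeries.coeff_succ_X_mul] at h
    have hne : ((p:ℚ)+1) ≠ 0 := by positivity
    have h2 : ((p:ℚ)+1) * PowerSeries.coeff (p+1) (bps^(p+2)) =
        ((p:ℚ)+1) * (-(PowerSeries.coeff p (bps^(p+1)))) := by
      push_cast at h ⊢
      linear_combination h
    have h3 := mul_left_cancel₀ hne h2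
    rw [show p+1+1 = p+2 from rfl, h3, ih]
    ring

lemma Q_rec (n s : ℕ) :
    PowerSeries.coeff (n+1) (bps^(n+2) * exp ℚ^(s+1)) =
      PowerSeries.coeff (n+1) (bps^(n+2) * exp ℚ^s) +
        PowerSeries.coeff n (bps^(n+1) * exp ℚ^s) := by
  have hsplit : bps^(n+2) * exp ℚ^(s+1) =
      bps^(n+2) * exp ℚ^s + X * (bps^(n+1) * exp ℚ^s) := by
    have hx := bps_mul
    ring_nf
    linear_combination (bps^(n+1) * exp ℚ^s) * hx
  rw [hsplit, map_add, PowerSeries.coeff_succ_X_mul]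

lemma Q_base0 (s : ℕ) : PowerSeries.coeff 0 (bps^1 * exp ℚ^s) = 1 := by
  rw [PowerSeries.coeff_zero_eq_constantCoeff, map_mul, map_pow, map_pow,
    PowerSeries.constantCoeff_exp]
  have : PowerSeries.constantCoeff (R := ℚ) bps = 1 := by simp [bps]
  rw [this]; simp

lemma prod_neg (n : ℕ) : (∏ i ∈ Finset.range n, (-(i:ℚ)-1)) = (-1)^n * n.factorial := by
  induction n with
  | zero => simp
  | succ p ih =>
    rw [Finset.prod_range_succ, ih, Nat.factorial_succ]
    push_cast
    ring

lemma Q_eq_T : ∀ s n : ℕ, PowerSeries.coeff n (bps^(n+1) * exp ℚ^s) =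
    (∏ i ∈ Finset.range n, ((s:ℚ) - i - 1)) / n.factorial := by
  intro s
  induction s with
  | zero =>
    intro n
    simp only [pow_zero, mul_one, coeff_bps_pow, Nat.cast_zero]
    rw [show (∏ i ∈ Finset.range n, ((0:ℚ) - i - 1)) = ∏ i ∈ Finset.range n, (-(i:ℚ)-1) by
      apply Finset.prod_congr rfl; intro i _; ring, prod_neg]
    have h2 : ((n.factorial : ℕ) : ℚ) ≠ 0 := Nat.cast_ne_zero.mpr n.factorial_ne_zero
    field_simp
  | succ s ih =>
    intro n
    match n with
    | 0 => simpa using Q_base0 (s+1)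
    | (p+1) =>
      rw [Q_rec p s, ih (p+1), ih p]
      have h1 : (∏ i ∈ Finset.range (p+1), (((s+1:ℕ):ℚ) - i - 1)) =
          (∏ i ∈ Finset.range p, ((s:ℚ) - i - 1)) * (s:ℚ) := by
        rw [Finset.prod_range_succ']
        push_cast
        congr 1
        · apply Finset.prod_congr rfl; intro i _; ring
        · ring
      rw [h1, Finset.prod_range_succ]
      have h2 : ((p.factorial : ℕ) : ℚ) ≠ 0 := Nat.cast_ne_zero.mpr p.factorial_ne_zero
      have h3 : (((p+1).factorial : ℕ) : ℚ) ≠ 0 := Nat.cast_ne_zero.mpr (p+1).factorial_ne_zero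
      rw [Nat.factorial_succ]
      push_cast
      field_simp
      ring

lemma Qval1 (m : ℕ) : PowerSeries.coeff (2*m+2) (bps^(2*m+3) * exp ℚ^(m+1)) = 0 := by
  have := Q_eq_T (m+1) (2*m+2)
  rw [show 2*m+2+1 = 2*m+3 from rfl] at this
  rw [this, div_eq_zero_iff]
  left
  apply Finset.prod_eq_zero (i := m) (Finset.mem_range.mpr (by omega))
  push_cast; ring

lemma Qval2 (m : ℕ) : PowerSeries.coeff (2*m+2) (bps^(2*m+3) * exp ℚ^(m+2)) = 0 := by
  have := Q_eq_T (m+2) (2*m+2)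
  rw [show 2*m+2+1 = 2*m+3 from rfl] at this
  rw [this, div_eq_zero_iff]
  left
  apply Finset.prod_eq_zero (i := m+1) (Finset.mem_range.mpr (by omega))
  push_cast; ring

lemma coeff_F_odd (m : ℕ) :
    PowerSeries.coeff (2*m+1) (bps^(2*m+2) * exp ℚ^(m+1)) = 0 := by
  have hsplit : X * (bps^(2*m+2) * exp ℚ^(m+1)) =
      bps^(2*m+3) * exp ℚ^(m+2) - bps^(2*m+3) * exp ℚ^(m+1) := by
    have hx := bps_mul
    linear_combination (-(bps^(2*m+2)) * exp ℚ^(m+1)) * hx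
  have h := congrArg (PowerSeries.coeff (2*m+2)) hsplit
  rw [show 2*m+2 = 2*m+1+1 from rfl, PowerSeries.coeff_succ_X_mul] at h
  rw [h, map_sub]
  rw [show 2*m+1+1 = 2*m+2 from rfl, Qval1, Qval2]
  ring

lemma coeff_bF (m : ℕ) :
    PowerSeries.coeff (2*m+2) (bps * (bps^(2*m+2) * exp ℚ^(m+1))) = 0 := by
  have : bps * (bps^(2*m+2) * exp ℚ^(m+1)) = bps^(2*m+3) * exp ℚ^(m+1) := by ring
  rw [this, Qval1]

lemma sum_even_odd (f : ℕ → ℚ) (N : ℕ) :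
    ∑ j ∈ Finset.range (2*N+1), f j =
      ∑ k ∈ Finset.range (N+1), f (2*k) + ∑ k ∈ Finset.range N, f (2*k+1) := by
  induction N with
  | zero => simp
  | succ N ih =>
    rw [show 2*(N+1)+1 = (2*N+1)+1+1 from by omega, Finset.sum_range_succ,
      Finset.sum_range_succ, ih, Finset.sum_range_succ (fun k => f (2*k)) (N+1),
      Finset.sum_range_succ (fun k => f (2*k+1)) N]
    rw [show 2*N+1+1 = 2*(N+1) from by omega]
    ring

lemma total_sum (m : ℕ) :
    ∑ j ∈ Finset.range (2*m+3),
      PowerSeries.coeff j bps *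
        PowerSeries.coeff (2*m+2-j) (bps^(2*m+2) * exp ℚ^(m+1)) = 0 := by
  have h := PowerSeries.coeff_mul (2*m+2) bps (bps^(2*m+2) * exp ℚ^(m+1))
  rw [Finset.Nat.sum_antidiagonal_eq_sum_range_succ_mk] at h
  rw [show 2*m+3 = 2*m+2+1 from rfl, ← h, coeff_bF]

lemma main_q (m : ℕ) :
    ∑ k ∈ Finset.range (m+2), bernoulli (2*k) / ((2*k).factorial : ℚ) *
      (genBernoulli (2*m+2) ((m:ℚ)+1) (2*m+2-2*k) / (((2*m+2-2*k).factorial : ℕ) : ℚ)) = 0 := by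
  have hmk : (PowerSeries.mk fun k => ((m:ℚ)+1)^k / (k.factorial : ℚ)) = exp ℚ ^ (m+1) := by
    rw [PowerSeries.exp_pow_eq_rescale_exp]
    ext n
    rw [PowerSeries.coeff_mk, PowerSeries.coeff_rescale, PowerSeries.coeff_exp]
    simp only [Algebra.algebraMap_self, RingHom.id_apply]
    push_cast
    ring
  set F : ℚ⟦X⟧ := bps^(2*m+2) * exp ℚ^(m+1) with hF
  have hgb : ∀ j : ℕ, genBernoulli (2*m+2) ((m:ℚ)+1) j / ((j.factorial : ℕ) : ℚ) =
      PowerSeries.coeff j F := by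
    intro j
    rw [genBernoulli, hmk]
    have h2 : ((j.factorial : ℕ) : ℚ) ≠ 0 := Nat.cast_ne_zero.mpr j.factorial_ne_zero
    rw [mul_div_assoc, mul_comm, div_mul_cancel₀ _ h2]
    rfl
  have hstep : ∀ k ∈ Finset.range (m+2),
      bernoulli (2*k) / ((2*k).factorial : ℚ) *
        (genBernoulli (2*m+2) ((m:ℚ)+1) (2*m+2-2*k) / (((2*m+2-2*k).factorial : ℕ) : ℚ)) =
      PowerSeries.coeff (2*k) bps * PowerSeries.coeff (2*m+2-(2*k)) F := by
    intro k _
    rw [hgb]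
    congr 1
    simp [bps]
  rw [Finset.sum_congr rfl hstep]
  have hodd : ∑ k ∈ Finset.range (m+1),
      PowerSeries.coeff (2*k+1) bps * PowerSeries.coeff (2*m+2-(2*k+1)) F = 0 := by
    apply Finset.sum_eq_zero
    intro k _
    match k with
    | 0 =>
      have : 2*m+2-(2*0+1) = 2*m+1 := by omega
      rw [this, coeff_F_odd]
      ring
    | (p+1) =>
      have hb : PowerSeries.coeff (2*(p+1)+1) bps = 0 := by
        have : bernoulli (2*(p+1)+1) = 0 := by
          rw [bernoulli_eq_bernoulli'_of_ne_one (by omega),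
            bernoulli'_eq_zero_of_odd ⟨p+1, by omega⟩ (by omega)]
        simp [bps, this]
      rw [hb, zero_mul]
  have htot := total_sum m
  rw [show 2*m+3 = 2*(m+1)+1 from by omega,
    sum_even_odd (fun j => PowerSeries.coeff j bps * PowerSeries.coeff (2*m+2-j) F) (m+1)]
    at htot
  rw [hodd, add_zero] at htot
  exact htot

open Complex in
/-- The polynomial
`𝓑_{2m+2}(φ) = -2^{2m+1} Σ_{k=0}^{m+1} (2πi)^{2k} (B_{2k}/(2k)!)
(B^{(2m+2)}_{2m+2-2k}(m+1)/(2m+2-2k)!) φ^{2m+2-2k}` vanishes at `φ = ±2πi`. -/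
theorem polyB_vanishes_at_two_pi_I (m : ℕ) (φ : ℂ)
    (hφ : φ = 2 * Real.pi * I ∨ φ = -(2 * Real.pi * I)) :
    -2 ^ (2 * m + 1) * ∑ k ∈ Finset.range (m + 2),
        (2 * (Real.pi : ℂ) * I) ^ (2 * k) * ((bernoulli (2 * k) : ℚ) : ℂ) /
            ((2 * k).factorial : ℂ) *
          (((genBernoulli (2 * m + 2) ((m : ℚ) + 1) (2 * m + 2 - 2 * k) : ℚ) : ℂ) /
            ((2 * m + 2 - 2 * k).factorial : ℂ)) * φ ^ (2 * m + 2 - 2 * k) = 0 := by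
  have hφ2 : φ^2 = (2*(Real.pi:ℂ)*I)^2 := by
    rcases hφ with h | h <;> rw [h] <;> ring
  have key : ∀ k ∈ Finset.range (m+2),
      (2 * (Real.pi : ℂ) * I) ^ (2 * k) * ((bernoulli (2 * k) : ℚ) : ℂ) /
            ((2 * k).factorial : ℂ) *
          (((genBernoulli (2 * m + 2) ((m : ℚ) + 1) (2 * m + 2 - 2 * k) : ℚ) : ℂ) /
            ((2 * m + 2 - 2 * k).factorial : ℂ)) * φ ^ (2 * m + 2 - 2 * k)
      = (2 * (Real.pi : ℂ) * I) ^ (2*m+2) *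
          ((bernoulli (2*k) / ((2*k).factorial : ℚ) *
            (genBernoulli (2*m+2) ((m:ℚ)+1) (2*m+2-2*k) /
              (((2*m+2-2*k).factorial : ℕ) : ℚ)) : ℚ) : ℂ) := by
    intro k hk
    have hk' : k ≤ m+1 := by
      have := Finset.mem_range.mp hk; omega
    have h1 : 2*m+2-2*k = 2*(m+1-k) := by omega
    rw [h1, pow_mul φ, hφ2, ← pow_mul]
    have h2 : (2*(Real.pi:ℂ)*I)^(2*k) * (2*(Real.pi:ℂ)*I)^(2*(m+1-k)) =
        (2*(Real.pi:ℂ)*I)^(2*m+2) := by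
      rw [← pow_add]; congr 1; omega
    push_cast
    linear_combination (((bernoulli (2*k) : ℚ) : ℂ) / ((2*k).factorial : ℂ) *
      (((genBernoulli (2*m+2) ((m:ℚ)+1) (2*(m+1-k)) : ℚ) : ℂ) /
        (((2*(m+1-k)).factorial : ℕ) : ℂ))) * h2
  rw [Finset.sum_congr rfl key, ← Finset.mul_sum]
  have hsum : ∑ k ∈ Finset.range (m+2),
      ((bernoulli (2*k) / ((2*k).factorial : ℚ) *
        (genBernoulli (2*m+2) ((m:ℚ)+1) (2*m+2-2*k) /
          (((2*m+2-2*k).factorial : ℕ) : ℚ)) : ℚ) : ℂ) = 0 := by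
    rw [← Rat.cast_sum, main_q m, Rat.cast_zero]
  rw [hsum, mul_zero, mul_zero]
end
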